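/- Let F be a subfield of ℝ, and suppose x, y ∈ M₂(F) satisfy x² = a • 1 with a < 0, y² = b • 1 with b > 0, y * x = − x * y, and x ≠ 0 ≠ y. Then the F-subalgebra of M₂(F) generated by x and y is all of M₂(F), and it is isomorphic to the quaternion algebra (a, b / F). -/

import Mathlib

open scoped Quaternion

set_option synthInstance.maxHeartbeats 400000
set_option maxHeartbeats 2000000

/-- If `d0 • 1 + d1 • x = 0` where `x ^ 2 = a • 1` with `a < 0`, then `d0 = d1 = 0`. -/
lemma stmt_7_half (F : Subfield ℝ) (x : Matrix (Fin 2) (Fin 2) F) (a : F)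
    (ha : (a : ℝ) < 0) (hxx : x * x = a • (1 : Matrix (Fin 2) (Fin 2) F))
    (d0 d1 : F) (h : d0 • (1 : Matrix (Fin 2) (Fin 2) F) + d1 • x = 0) :
    d0 = 0 ∧ d1 = 0 := by
  have h1 : d1 • x = -(d0 • (1 : Matrix (Fin 2) (Fin 2) F)) := by
    rw [eq_neg_iff_add_eq_zero, add_comm]; exact h
  have h2 : (d1 • x) * (d1 • x) = (-(d0 • (1 : Matrix (Fin 2) (Fin 2) F))) *
      (-(d0 • (1 : Matrix (Fin 2) (Fin 2) F))) := by rw [h1]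
  rw [smul_mul_smul_comm, hxx, smul_smul, neg_mul_neg, smul_mul_smul_comm, one_mul] at h2
  have h4 : d1 * d1 * a = d0 * d0 := by
    have := congrFun (congrFun h2 0) 0
    simpa [Matrix.smul_apply, Matrix.one_apply] using this
  have h5 : (d1 : ℝ) * d1 * a = (d0 : ℝ) * d0 := by
    exact_mod_cast congrArg (fun t : F => (t : ℝ)) h4
  have h6 : (d1 : ℝ) * d1 = 0 := by
    nlinarith [mul_self_nonneg (d0 : ℝ), mul_self_nonneg (d1 : ℝ)]
  have hd1 : (d1 : ℝ) = 0 := mul_self_eq_zero.mp h6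
  have h7 : (d0 : ℝ) * d0 = 0 := by rw [← h5, hd1]; ring
  have hd0 : (d0 : ℝ) = 0 := mul_self_eq_zero.mp h7
  exact ⟨by exact_mod_cast hd0, by exact_mod_cast hd1⟩

/-- Linear independence of `1, x, y, x*y`. -/
lemma stmt_7_key (F : Subfield ℝ) (x y : Matrix (Fin 2) (Fin 2) F) (a b : F)
    (ha : (a : ℝ) < 0) (hb : (0 : ℝ) < (b : ℝ))
    (hxx : x * x = a • (1 : Matrix (Fin 2) (Fin 2) F))
    (hyy : y * y = b • (1 : Matrix (Fin 2) (Fin 2) F))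
    (hanti : y * x = -(x * y)) (c0 c1 c2 c3 : F)
    (h : c0 • (1 : Matrix (Fin 2) (Fin 2) F) + c1 • x + c2 • y + c3 • (x * y) = 0) :
    c0 = 0 ∧ c1 = 0 ∧ c2 = 0 ∧ c3 = 0 := by
  have hbF : b ≠ 0 := by intro h'; rw [h'] at hb; norm_num at hb
  have m3 : x * y * x = -(a • y) := by
    rw [mul_assoc, hanti, mul_neg, ← mul_assoc, hxx, smul_mul_assoc, one_mul]
  have m4 : x * (x * y) * x = -(a • (x * y)) := by
    rw [mul_assoc x (x * y) x, mul_assoc x y x, hanti, mul_neg, mul_neg,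
      ← mul_assoc x x (x * y), hxx, smul_mul_assoc, one_mul]
  have h' : (c0 • (1 : Matrix (Fin 2) (Fin 2) F) + c1 • x) + (c2 • y + c3 • (x * y)) = 0 := by
    rw [← add_assoc]; exact h
  have e : x * ((c0 • (1 : Matrix (Fin 2) (Fin 2) F) + c1 • x) + (c2 • y + c3 • (x * y))) * x
      = a • (c0 • (1 : Matrix (Fin 2) (Fin 2) F) + c1 • x) - a • (c2 • y + c3 • (x * y)) := by
    simp only [mul_add, add_mul, mul_smul_comm, smul_mul_assoc, mul_one]
    rw [hxx, m3, m4]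
    simp only [smul_mul_assoc, one_mul]
    module
  have h2 : a • (c0 • (1 : Matrix (Fin 2) (Fin 2) F) + c1 • x)
      - a • (c2 • y + c3 • (x * y)) = 0 := by rw [← e, h', mul_zero, zero_mul]
  have hQP : c2 • y + c3 • (x * y) = -(c0 • (1 : Matrix (Fin 2) (Fin 2) F) + c1 • x) := by
    rw [eq_neg_iff_add_eq_zero, add_comm]; exact h'
  rw [hQP, smul_neg, sub_neg_eq_add, ← add_smul] at h2
  have hPz : c0 • (1 : Matrix (Fin 2) (Fin 2) F) + c1 • x = 0 := by
    rcases smul_eq_zero.mp h2 with h'' | h''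
    · exfalso
      have : (a : ℝ) + a = 0 := by exact_mod_cast congrArg (fun t : F => (t : ℝ)) h''
      nlinarith
    · exact h''
  obtain ⟨hc0, hc1⟩ := stmt_7_half F x a ha hxx _ _ hPz
  have hQz : c2 • y + c3 • (x * y) = 0 := by rw [hQP, hPz, neg_zero]
  have hQ2 : (c2 • (1 : Matrix (Fin 2) (Fin 2) F) + c3 • x) * y = 0 := by
    rw [add_mul, smul_mul_assoc, one_mul, smul_mul_assoc]; exact hQz
  have hQ3 : b • (c2 • (1 : Matrix (Fin 2) (Fin 2) F) + c3 • x) = 0 := by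
    have := congrArg (· * y) hQ2
    simpa [mul_assoc, hyy, mul_smul_comm, mul_one, zero_mul] using this
  have hQ4 : c2 • (1 : Matrix (Fin 2) (Fin 2) F) + c3 • x = 0 := by
    rcases smul_eq_zero.mp hQ3 with h'' | h''
    · exact absurd h'' hbF
    · exact h''
  obtain ⟨hc2, hc3⟩ := stmt_7_half F x a ha hxx _ _ hQ4
  exact ⟨hc0, hc1, hc2, hc3⟩

set_option maxHeartbeats 2000000 in
set_option synthInstance.maxHeartbeats 400000 in
theorem stmt_7 (F : Subfield ℝ) (x y : Matrix (Fin 2) (Fin 2) F) (a b : F)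
    (ha : (a : ℝ) < 0) (hb : (0 : ℝ) < (b : ℝ))
    (hx : x ^ 2 = a • (1 : Matrix (Fin 2) (Fin 2) F))
    (hy : y ^ 2 = b • (1 : Matrix (Fin 2) (Fin 2) F))
    (hanti : y * x = -(x * y)) (hx0 : x ≠ 0) (hy0 : y ≠ 0) :
    Algebra.adjoin F {x, y} = (⊤ : Subalgebra F (Matrix (Fin 2) (Fin 2) F)) ∧
      Nonempty (ℍ[F, a, b] ≃ₐ[F] Matrix (Fin 2) (Fin 2) F) := by
  have hxx : x * x = a • (1 : Matrix (Fin 2) (Fin 2) F) := by rw [← sq]; exact hx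
  have hyy : y * y = b • (1 : Matrix (Fin 2) (Fin 2) F) := by rw [← sq]; exact hy
  let B : QuaternionAlgebra.Basis (Matrix (Fin 2) (Fin 2) F) a 0 b :=
    ⟨x, y, x * y, by rw [hxx, zero_smul, add_zero], hyy, rfl, by rw [hanti, zero_smul, zero_sub]⟩
  let φ : ℍ[F, a, b] →ₐ[F] Matrix (Fin 2) (Fin 2) F := B.liftHom
  have hφ : ∀ q : ℍ[F, a, b], φ q = q.re • (1 : Matrix (Fin 2) (Fin 2) F)
      + q.imI • x + q.imJ • y + q.imK • (x * y) := by
    intro q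
    show algebraMap F (Matrix (Fin 2) (Fin 2) F) q.re + q.imI • x + q.imJ • y + q.imK • (x * y)
      = _
    rw [Algebra.algebraMap_eq_smul_one]
  have hinj : Function.Injective φ := by
    rw [injective_iff_map_eq_zero]
    intro q hq
    rw [hφ] at hq
    obtain ⟨h0, h1, h2, h3⟩ := stmt_7_key F x y a b ha hb hxx hyy hanti _ _ _ _ hq
    ext <;> simp [h0, h1, h2, h3]
  have hfr : Module.finrank F ℍ[F, a, b]
      = Module.finrank F (Matrix (Fin 2) (Fin 2) F) := by
    rw [QuaternionAlgebra.finrank_eq_four, Module.finrank_matrix]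
    simp
  have hinj' : Function.Injective φ.toLinearMap := hinj
  have hsurj : Function.Surjective φ :=
    (LinearMap.injective_iff_surjective_of_finrank_eq_finrank hfr).mp hinj'
  constructor
  · rw [eq_top_iff]
    rintro m -
    obtain ⟨q, rfl⟩ := hsurj m
    rw [hφ]
    have hxm : x ∈ Algebra.adjoin F {x, y} := Algebra.subset_adjoin (by simp)
    have hym : y ∈ Algebra.adjoin F {x, y} := Algebra.subset_adjoin (by simp)
    have h1m : (1 : Matrix (Fin 2) (Fin 2) F) ∈ Algebra.adjoin F {x, y} := one_mem _
    exact add_mem (add_mem (add_mem (Subalgebra.smul_mem _ h1m _)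
      (Subalgebra.smul_mem _ hxm _)) (Subalgebra.smul_mem _ hym _))
      (Subalgebra.smul_mem _ (mul_mem hxm hym) _)
  · exact ⟨AlgEquiv.ofBijective φ ⟨hinj, hsurj⟩⟩
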